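/- Suppose κ is an inaccessible cardinal. Then κ is strongly compact if and only if TP(κ,λ) holds for every λ ≥ κ. -/

import Mathlib

open Cardinal Set

/-! Combinatorial framework: `P_κ λ`, clubs, stationarity, thin/slender lists,
branches, the principles `TP`, `SP`, `ITP`, `ISP`, the ideals `I_IT`, `I_IS`,
ultrafilter notions, ordinal clubs, and square sequences. -/

/-- `P_κ λ`: the collection of subsets of (the set of ordinals below) `λ` of size `< κ`. -/
def Pk (κ lam : Cardinal.{0}) : Set (Set Ordinal.{0}) :=
  {a | (∀ α ∈ a, α < lam.ord) ∧ #a < Cardinal.lift.{1} κ}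

/-- `C` is club in `P_κ X` (represented by `S`, a collection of subsets of `X`):
cofinal in `(S, ⊆)` and closed under unions of `⊆`-increasing chains of length `< κ`. -/
def IsClubIn {X : Type*} (κ : Cardinal.{0}) (S : Set (Set X)) (C : Set (Set X)) : Prop :=
  C ⊆ S ∧ (∀ a ∈ S, ∃ c ∈ C, a ⊆ c) ∧
    ∀ δ : Ordinal.{0}, 0 < δ → δ.card < κ →
      ∀ f : Ordinal.{0} → Set X, (∀ β < δ, f β ∈ C) →
        (∀ β γ, β ≤ γ → γ < δ → f β ⊆ f γ) →
        (⋃ β ∈ Set.Iio δ, f β) ∈ C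

/-- `T` is stationary in `P_κ X`: it meets every club. -/
def IsStatIn {X : Type*} (κ : Cardinal.{0}) (S T : Set (Set X)) : Prop :=
  T ⊆ S ∧ ∀ C, IsClubIn κ S C → (T ∩ C).Nonempty

/-- A `P_κ λ`-list: `d a ⊆ a` for every `a ∈ P_κ λ`. -/
def IsList (κ lam : Cardinal) (d : Set Ordinal → Set Ordinal) : Prop :=
  ∀ a ∈ Pk κ lam, d a ⊆ a

/-- A thin `P_κ λ`-list: on a club of `c`'s, `|{d_a ∩ c : c ⊆ a ∈ P_κ λ}| < κ`. -/
def IsThin (κ lam : Cardinal) (d : Set Ordinal → Set Ordinal) : Prop :=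
  ∃ C, IsClubIn κ (Pk κ lam) C ∧
    ∀ c ∈ C, #{x : Set Ordinal | ∃ a ∈ Pk κ lam, c ⊆ a ∧ x = d a ∩ c} < Cardinal.lift.{1} κ

/-- `H_θ`: sets hereditarily of cardinality `< θ`. -/
def HSet (θ : Cardinal.{0}) : Set ZFSet.{0} :=
  {x | ZFSet.Hereditarily (fun y => #y.toSet < Cardinal.lift.{1} θ) x}

/-- `x` is the von Neumann ordinal corresponding to the ordinal `α`. -/
def IsOrdZF (x : ZFSet) (α : Ordinal) : Prop :=
  x.IsOrdinal ∧ x.rank = α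

/-- The ZFC set `x` codes the set of ordinals `b`. -/
def CodesSet (x : ZFSet) (b : Set Ordinal) : Prop :=
  ∀ y, y ∈ x ↔ ∃ α ∈ b, IsOrdZF y α

/-- `M ∩ λ`: the set of ordinals below `λ` whose von Neumann code lies in `M`. -/
def ordsOf (lam : Cardinal) (M : Set ZFSet) : Set Ordinal :=
  {α | α < lam.ord ∧ ∃ x ∈ M, IsOrdZF x α}

/-- A slender `P_κ λ`-list: for every sufficiently large regular `θ` there is a club
`C ⊆ P_κ H_θ` such that `d_{M ∩ λ} ∩ b ∈ M` for all `M ∈ C` and all countable `b ∈ M`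
with `b ⊆ λ`. -/
def IsSlender (κ lam : Cardinal) (d : Set Ordinal → Set Ordinal) : Prop :=
  ∃ θ₀ : Cardinal, ∀ θ, θ₀ ≤ θ → θ.IsRegular →
    ∃ C, IsClubIn κ {M : Set ZFSet.{0} | M ⊆ HSet θ ∧ #M < Cardinal.lift.{1} κ} C ∧
      ∀ M ∈ C, ∀ b : Set Ordinal, b.Countable → (∀ α ∈ b, α < lam.ord) →
        (∃ x ∈ M, CodesSet x b) →
        ∃ x ∈ M, CodesSet x (d (ordsOf lam M) ∩ b)

/-- `e` is a cofinal branch of the list `d`. -/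
def IsCofBranch (κ lam : Cardinal) (d : Set Ordinal → Set Ordinal) (e : Set Ordinal) : Prop :=
  (∀ α ∈ e, α < lam.ord) ∧
    ∀ a ∈ Pk κ lam, ∃ z ∈ Pk κ lam, a ⊆ z ∧ e ∩ a = d z ∩ a

/-- `e` is an ineffable branch of the list `d`. -/
def IsIneffBranch (κ lam : Cardinal) (d : Set Ordinal → Set Ordinal) (e : Set Ordinal) : Prop :=
  (∀ α ∈ e, α < lam.ord) ∧
    IsStatIn κ (Pk κ lam) {a ∈ Pk κ lam | e ∩ a = d a}

/-- `TP(κ,λ)`: every thin `P_κ λ`-list has a cofinal branch. -/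
def TP (κ lam : Cardinal) : Prop :=
  ∀ d, IsList κ lam d → IsThin κ lam d → ∃ e, IsCofBranch κ lam d e

/-- `SP(κ,λ)`: every slender `P_κ λ`-list has a cofinal branch. -/
def SP (κ lam : Cardinal) : Prop :=
  ∀ d, IsList κ lam d → IsSlender κ lam d → ∃ e, IsCofBranch κ lam d e

/-- `ITP(κ,λ)`: every thin `P_κ λ`-list has an ineffable branch. -/
def ITP (κ lam : Cardinal) : Prop :=
  ∀ d, IsList κ lam d → IsThin κ lam d → ∃ e, IsIneffBranch κ lam d e

/-- `ISP(κ,λ)`: every slender `P_κ λ`-list has an ineffable branch. -/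
def ISP (κ lam : Cardinal) : Prop :=
  ∀ d, IsList κ lam d → IsSlender κ lam d → ∃ e, IsIneffBranch κ lam d e

/-- The list `d` is `A`-effable. -/
def IsEffable (κ lam : Cardinal) (d : Set Ordinal → Set Ordinal) (A : Set (Set Ordinal)) : Prop :=
  ∀ S, S ⊆ A → IsStatIn κ (Pk κ lam) S →
    ∃ a ∈ S, ∃ b ∈ S, a ⊆ b ∧ d a ≠ d b ∩ a

/-- The ideal `I_IT[κ,λ]`. -/
def IIT (κ lam : Cardinal) : Set (Set (Set Ordinal)) :=
  {A | A ⊆ Pk κ lam ∧ ∃ d, IsList κ lam d ∧ IsThin κ lam d ∧ IsEffable κ lam d A}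

/-- The ideal `I_IS[κ,λ]`. -/
def IIS (κ lam : Cardinal) : Set (Set (Set Ordinal)) :=
  {A | A ⊆ Pk κ lam ∧ ∃ d, IsList κ lam d ∧ IsSlender κ lam d ∧ IsEffable κ lam d A}

/-- The filter `F_IT[κ,λ]` dual to `I_IT[κ,λ]`. -/
def FIT (κ lam : Cardinal) : Set (Set (Set Ordinal)) :=
  {A | A ⊆ Pk κ lam ∧ (Pk κ lam \ A) ∈ IIT κ lam}

/-- `U` is an ultrafilter on the set `X`. -/
def IsUFOn {α : Type*} (X : Set α) (U : Set (Set α)) : Prop :=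
  (∀ A ∈ U, A ⊆ X) ∧ X ∈ U ∧ ∅ ∉ U ∧
    (∀ A ∈ U, ∀ B, A ⊆ B → B ⊆ X → B ∈ U) ∧
    (∀ A ∈ U, ∀ B ∈ U, A ∩ B ∈ U) ∧
    (∀ A, A ⊆ X → (A ∈ U ∨ X \ A ∈ U))

/-- `U` is `κ`-complete: closed under intersections of fewer than `κ` of its members. -/
def KComplete (κ : Cardinal.{0}) (X : Set (Set Ordinal)) (U : Set (Set (Set Ordinal))) : Prop :=
  ∀ s : Set (Set (Set Ordinal)), s ⊆ U → #s < Cardinal.lift.{1} κ → X ∩ ⋂₀ s ∈ U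

/-- `U` is fine on `P_κ λ`. -/
def Fine (κ lam : Cardinal) (U : Set (Set (Set Ordinal))) : Prop :=
  ∀ x < lam.ord, {a ∈ Pk κ lam | x ∈ a} ∈ U

/-- `U` is normal on `P_κ λ`: closed under diagonal intersections. -/
def NormalUF (κ lam : Cardinal) (U : Set (Set (Set Ordinal))) : Prop :=
  ∀ A : Ordinal → Set (Set Ordinal), (∀ x < lam.ord, A x ∈ U) →
    {a ∈ Pk κ lam | ∀ x ∈ a, a ∈ A x} ∈ U

/-- `κ` is strongly compact: for every `λ ≥ κ` there is a `κ`-complete fine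
ultrafilter on `P_κ λ`. -/
def IsStronglyCompact (κ : Cardinal) : Prop :=
  ∀ lam : Cardinal, κ ≤ lam →
    ∃ U, IsUFOn (Pk κ lam) U ∧ KComplete κ (Pk κ lam) U ∧ Fine κ lam U

/-- `κ` is supercompact: for every `λ ≥ κ` there is a `κ`-complete normal fine
ultrafilter on `P_κ λ`. -/
def IsSupercompact (κ : Cardinal) : Prop :=
  ∀ lam : Cardinal, κ ≤ lam →
    ∃ U, IsUFOn (Pk κ lam) U ∧ KComplete κ (Pk κ lam) U ∧ Fine κ lam U ∧ NormalUF κ lam U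

/-- `C` is club in the ordinal `o`: unbounded in `o` and closed. -/
def OrdClub (o : Ordinal) (C : Set Ordinal) : Prop :=
  C ⊆ Set.Iio o ∧ (∀ β < o, ∃ γ ∈ C, β ≤ γ) ∧
    ∀ α < o, 0 < α → sSup (C ∩ Set.Iio α) = α → α ∈ C

/-- `S` is stationary in the ordinal `o`. -/
def OrdStat (o : Ordinal) (S : Set Ordinal) : Prop :=
  S ⊆ Set.Iio o ∧ ∀ C, OrdClub o C → (S ∩ C).Nonempty

/-- `δ` is a limit point of `C`: `δ > 0` and `δ = sup (C ∩ δ)`. -/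
def IsLimPt (C : Set Ordinal) (δ : Ordinal) : Prop :=
  0 < δ ∧ sSup (C ∩ Set.Iio δ) = δ

/-- `κ` is an ineffable cardinal. -/
def IsIneffableCard (κ : Cardinal) : Prop :=
  ∀ d : Ordinal → Set Ordinal, (∀ α < κ.ord, d α ⊆ Set.Iio α) →
    ∃ e ⊆ Set.Iio κ.ord, OrdStat κ.ord {α | α < κ.ord ∧ e ∩ Set.Iio α = d α}

/-- A `□_E(κ,λ)`-sequence. -/
def IsSquareSeq (κ : Cardinal.{0}) (lam : Ordinal.{0}) (E : Set Ordinal.{0})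
    (𝒞 : Ordinal.{0} → Set (Set Ordinal.{0})) : Prop :=
  (∀ α, Order.IsSuccLimit α → α ∈ E → α < lam →
    ((𝒞 α).Nonempty ∧ #(𝒞 α) < Cardinal.lift.{1} κ) ∧
      ∀ C ∈ 𝒞 α, OrdClub α C ∧ ∀ β, IsLimPt C β → β ∈ E → C ∩ Set.Iio β ∈ 𝒞 β) ∧
  ¬∃ D, OrdClub lam D ∧ ∀ δ, IsLimPt D δ → δ ∈ E → δ < lam → D ∩ Set.Iio δ ∈ 𝒞 δ

/-- `□_E(κ,λ)` holds. -/
def SquareE (κ : Cardinal.{0}) (lam : Ordinal.{0}) (E : Set Ordinal.{0}) : Prop :=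
  ∃ 𝒞, IsSquareSeq κ lam E 𝒞

/-- `(a, ∈) ≺ (λ, ∈)`: `a` is an elementary substructure of the ordinals below `lam`
(with `∈`, equivalently the order, as the only relation). -/
def ElemSubOrd (lam : Ordinal) (a : Set Ordinal) : Prop :=
  letI := FirstOrder.Language.orderStructure ↥a
  letI := FirstOrder.Language.orderStructure ↥(Set.Iio lam)
  ∃ h : a ⊆ Set.Iio lam,
    ∀ (n : ℕ) (φ : FirstOrder.Language.order.Formula (Fin n)) (v : Fin n → ↥a),
      φ.Realize v ↔ φ.Realize fun i => Set.inclusion h (v i)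

/-- `P'_κ λ`: the members `a` of `P_κ λ` with `a ∩ κ` an ordinal and `(a,∈) ≺ (λ,∈)`. -/
def P'k (κ lam : Cardinal) : Set (Set Ordinal) :=
  {a ∈ Pk κ lam | (∃ β : Ordinal, a ∩ Set.Iio κ.ord = Set.Iio β) ∧ ElemSubOrd lam.ord a}

/-- `κ_a`: the ordinal `a ∩ κ` (for `a ∈ P'_κ λ`). -/
noncomputable def kapOf (κ : Cardinal) (a : Set Ordinal) : Ordinal :=
  sInf {β : Ordinal | a ∩ Set.Iio κ.ord ⊆ Set.Iio β}

/-! If `U` is a `κ`-complete fine ultrafilter on `P_κ λ`, a thin list `d` has the branch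
`{α : U-almost every d_a contains α}`: thinness cuts each cone `{a : c ⊆ a}` into fewer than `κ`
pieces according to the value of `d_a ∩ c`, and `κ`-completeness puts one piece into `U`.

Conversely, for inaccessible `κ` every list is thin. Code the subsets `A` of `P_κ λ` injectively
by ordinals below `μ = 2 ^ 2 ^ λ` and consider the `P_κ μ`-list
`d_a = {code A ∈ a : a ∩ λ ∈ A}`. A cofinal branch `e` of it decides every `A` by `code A ∈ e`,
and fewer than `κ` of these decisions are always realized at one point `z ∩ λ` of `P_κ λ`;
hence `{A : code A ∈ e}` is a `κ`-complete fine ultrafilter. -/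

section Cardinals

lemma le_two_power_two_power (c : Cardinal) : c ≤ (2 : Cardinal) ^ (2 : Cardinal) ^ c :=
  (cantor c).le.trans (cantor _).le

variable {κ : Cardinal.{0}}

lemma Pk_isClubIn (hκ : κ.IsRegular) (lam : Cardinal.{0}) : IsClubIn κ (Pk κ lam) (Pk κ lam) := by
  refine ⟨subset_rfl, fun a ha => ⟨a, ha, subset_rfl⟩, fun δ _ hδ f hf _ => ⟨?_, ?_⟩⟩
  · simp only [mem_iUnion]
    rintro α ⟨β, hβ, hα⟩
    exact (hf β hβ).1 α hα
  · rw [biUnion_eq_iUnion, card_iUnion_lt_iff_forall_of_isRegular hκ.lift]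
    · exact fun β => (hf β β.2).2
    · rwa [mk_Iio_ordinal, lift_lt]

lemma mk_powerset_lt_lift (hκ : κ.IsStrongLimit) {c : Set Ordinal.{0}} (hc : #c < lift.{1} κ) :
    #(𝒫 c) < lift.{1} κ := by
  obtain ⟨c', hc', hlift⟩ := lt_lift_iff.1 hc
  rw [mk_powerset, ← hlift, ← lift_two_power, lift_lt]
  exact hκ.isStrongPrelimit hc'

lemma isThin_of_isStrongLimit (hreg : κ.IsRegular) (hsl : κ.IsStrongLimit) (lam : Cardinal.{0})
    (d : Set Ordinal → Set Ordinal) : IsThin κ lam d := by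
  refine ⟨Pk κ lam, Pk_isClubIn hreg lam, fun c hc => ?_⟩
  refine (mk_le_mk_of_subset ?_).trans_lt (mk_powerset_lt_lift hsl hc.2)
  rintro x ⟨a, -, -, rfl⟩
  exact inter_subset_right

end Cardinals

lemma IsUFOn.nonempty_of_mem {α : Type*} {X : Set α} {U : Set (Set α)} (hU : IsUFOn X U)
    {A : Set α} (hA : A ∈ U) : A.Nonempty :=
  nonempty_iff_ne_empty.2 fun h => hU.2.2.1 (h ▸ hA)

def ufBranch (κ lam : Cardinal.{0}) (U : Set (Set (Set Ordinal)))
    (d : Set Ordinal → Set Ordinal) : Set Ordinal :=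
  {α | α < lam.ord ∧ {a ∈ Pk κ lam | α ∈ d a} ∈ U}

section Ultrafilter

variable {κ lam : Cardinal.{0}} {U : Set (Set (Set Ordinal))}

lemma KComplete.exists_mem_of_sUnion_mem {X : Set (Set Ordinal)} (hU : IsUFOn X U)
    (hcomp : KComplete κ X U) {s : Set (Set (Set Ordinal))} (hs : #s < lift.{1} κ)
    (hsU : ⋃₀ s ∈ U) : ∃ A ∈ s, A ∈ U := by
  by_contra! hnot
  have ⟨hUX, _, _, _, hinter, hultra⟩ := hU
  have hcompl : (X \ ·) '' s ⊆ U := by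
    rintro _ ⟨A, hA, rfl⟩
    exact (hultra A ((subset_sUnion_of_mem hA).trans (hUX _ hsU))).resolve_left (hnot A hA)
  obtain ⟨a, ⟨-, ha⟩, A, hA, haA⟩ :=
    hU.nonempty_of_mem (hinter _ (hcomp _ hcompl (mk_image_le.trans_lt hs)) _ hsU)
  exact (ha _ ⟨A, hA, rfl⟩).2 haA

lemma cone_mem_of_fine (hcomp : KComplete κ (Pk κ lam) U) (hfine : Fine κ lam U)
    {c : Set Ordinal} (hc : c ∈ Pk κ lam) : {a ∈ Pk κ lam | c ⊆ a} ∈ U := by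
  have h := hcomp ((fun x => {a ∈ Pk κ lam | x ∈ a}) '' c)
    (by rintro _ ⟨x, hx, rfl⟩; exact hfine x (hc.1 x hx)) (mk_image_le.trans_lt hc.2)
  convert h using 1
  ext a
  simp only [mem_sep_iff, mem_inter_iff, mem_sInter, forall_mem_image]
  exact ⟨fun ⟨ha, hca⟩ => ⟨ha, fun x hx => ⟨ha, hca hx⟩⟩, fun ⟨ha, h⟩ => ⟨ha, fun x hx => (h hx).2⟩⟩

lemma ufBranch_inter_eq (hU : IsUFOn (Pk κ lam) U) {d : Set Ordinal → Set Ordinal}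
    {c v : Set Ordinal} (hc : c ∈ Pk κ lam) (hv : {a ∈ Pk κ lam | c ⊆ a ∧ d a ∩ c = v} ∈ U) :
    ufBranch κ lam U d ∩ c = v := by
  have ⟨_, _, _, hup, hinter, _⟩ := hU
  ext α
  constructor
  · rintro ⟨⟨-, hαU⟩, hαc⟩
    obtain ⟨a, ⟨-, hαa⟩, -, -, hav⟩ := hU.nonempty_of_mem (hinter _ hαU _ hv)
    exact hav ▸ ⟨hαa, hαc⟩
  · intro hαv
    obtain ⟨a, -, -, rfl⟩ := hU.nonempty_of_mem hv
    refine ⟨⟨hc.1 α hαv.2, hup _ hv _ ?_ (sep_subset _ _)⟩, hαv.2⟩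
    rintro b ⟨hb, -, hbv⟩
    exact ⟨hb, (hbv ▸ hαv : α ∈ d b ∩ c).1⟩

lemma exists_inter_eq_mem (hU : IsUFOn (Pk κ lam) U) (hcomp : KComplete κ (Pk κ lam) U)
    (hfine : Fine κ lam U) {d : Set Ordinal → Set Ordinal} {c : Set Ordinal} (hc : c ∈ Pk κ lam)
    (hthin : #{x | ∃ a ∈ Pk κ lam, c ⊆ a ∧ x = d a ∩ c} < lift.{1} κ) :
    ∃ v, {a ∈ Pk κ lam | c ⊆ a ∧ d a ∩ c = v} ∈ U := by
  set piece := fun v => {a ∈ Pk κ lam | c ⊆ a ∧ d a ∩ c = v}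
  have hcover :
      ⋃₀ (piece '' {x | ∃ a ∈ Pk κ lam, c ⊆ a ∧ x = d a ∩ c}) = {a ∈ Pk κ lam | c ⊆ a} := by
    ext a
    constructor
    · rintro ⟨_, ⟨v, -, rfl⟩, ha, hca, -⟩
      exact ⟨ha, hca⟩
    · rintro ⟨ha, hca⟩
      exact ⟨piece (d a ∩ c), ⟨_, ⟨a, ha, hca, rfl⟩, rfl⟩, ha, hca, rfl⟩
  obtain ⟨_, ⟨v, -, rfl⟩, hv⟩ := hcomp.exists_mem_of_sUnion_mem hU (mk_image_le.trans_lt hthin)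
    (hcover ▸ cone_mem_of_fine hcomp hfine hc)
  exact ⟨v, hv⟩

theorem tp_of_kComplete_fine (hU : IsUFOn (Pk κ lam) U) (hcomp : KComplete κ (Pk κ lam) U)
    (hfine : Fine κ lam U) : TP κ lam := by
  rintro d - ⟨C, hC, hthin⟩
  refine ⟨ufBranch κ lam U d, fun α hα => hα.1, fun a ha => ?_⟩
  obtain ⟨c, hcC, hac⟩ := hC.2.1 a ha
  obtain ⟨v, hv⟩ := exists_inter_eq_mem hU hcomp hfine (hC.1 hcC) (hthin c hcC)
  obtain ⟨z, hz, hcz, hzv⟩ := hU.nonempty_of_mem hv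
  refine ⟨z, hz, hac.trans hcz, ?_⟩
  rw [← inter_eq_right.2 hac, ← inter_assoc, ← inter_assoc, ufBranch_inter_eq hU (hC.1 hcC) hv,
    hzv]

end Ultrafilter

section Realizable

variable {κ : Cardinal.{0}} {X : Set (Set Ordinal)} {U : Set (Set (Set Ordinal))}

theorem isUFOn_and_kComplete_of_realizable (hκ : ℵ₀ ≤ κ) (hUX : ∀ A ∈ U, A ⊆ X)
    (hreal : ∀ s ⊆ 𝒫 X, #s < lift.{1} κ → ∃ b ∈ X, ∀ A ∈ s, A ∈ U ↔ b ∈ A) :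
    IsUFOn X U ∧ KComplete κ X U := by
  have hfin : ∀ s ⊆ 𝒫 X, s.Finite → ∃ b ∈ X, ∀ A ∈ s, A ∈ U ↔ b ∈ A := fun s hsX hs =>
    hreal s hsX (hs.lt_aleph0.trans_le (aleph0_le_lift.2 hκ))
  refine ⟨⟨hUX, ?_, ?_, ?_, ?_, ?_⟩, ?_⟩
  · obtain ⟨b, hb, hbX⟩ := hfin {X} (by simp) (finite_singleton _)
    exact (hbX X rfl).2 hb
  · intro h
    obtain ⟨b, -, hb⟩ := hfin {∅} (by simp) (finite_singleton _)
    exact (hb ∅ rfl).1 h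
  · intro A hA B hAB hBX
    obtain ⟨b, -, hb⟩ := hfin {A, B} (by simp [insert_subset_iff, hUX A hA, hBX]) (toFinite _)
    exact (hb B (by simp)).2 (hAB ((hb A (by simp)).1 hA))
  · intro A hA B hB
    obtain ⟨b, -, hb⟩ := hfin {A, B, A ∩ B}
      (by simp [insert_subset_iff, hUX A hA, hUX B hB, inter_subset_left.trans (hUX A hA)])
      (toFinite _)
    exact (hb _ (by simp)).2 ⟨(hb A (by simp)).1 hA, (hb B (by simp)).1 hB⟩
  · intro A hAX
    obtain ⟨b, hbX, hb⟩ := hfin {A, X \ A} (by simp [insert_subset_iff, hAX]) (toFinite _)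
    by_cases hbA : b ∈ A
    · exact .inl ((hb A (by simp)).2 hbA)
    · exact .inr ((hb _ (by simp)).2 ⟨hbX, hbA⟩)
  · intro s hsU hs
    have hsmall : #(insert (X ∩ ⋂₀ s) s : Set _) < lift.{1} κ :=
      mk_insert_le.trans_lt (add_lt_of_lt (aleph0_le_lift.2 hκ) hs
        (one_lt_aleph0.trans_le (aleph0_le_lift.2 hκ)))
    obtain ⟨b, hbX, hb⟩ := hreal _
      (insert_subset_iff.2 ⟨inter_subset_left, fun A hA => hUX A (hsU hA)⟩) hsmall
    exact (hb _ (mem_insert _ _)).2 ⟨hbX, fun A hA => (hb A (mem_insert_of_mem _ hA)).1 (hsU hA)⟩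

end Realizable

lemma mk_powerset_Pk_le (κ lam : Cardinal.{0}) :
    #(𝒫 Pk κ lam) ≤ lift.{1} ((2 : Cardinal) ^ (2 : Cardinal) ^ lam) := by
  have hPk : #(Pk κ lam) ≤ lift.{1} ((2 : Cardinal) ^ lam) := by
    have hsub : Pk κ lam ⊆ 𝒫 Iio lam.ord := fun a ha => ha.1
    refine (mk_le_mk_of_subset hsub).trans ?_
    rw [mk_powerset, mk_Iio_ordinal, card_ord, lift_two_power]
  rw [mk_powerset, lift_two_power]
  exact power_le_power_left two_ne_zero hPk

lemma exists_code_powerset_Pk (κ lam : Cardinal.{0}) :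
    ∃ code : Set (Set Ordinal.{0}) → Ordinal.{0}, InjOn code (𝒫 Pk κ lam) ∧
      MapsTo code (𝒫 Pk κ lam) (Iio ((2 : Cardinal) ^ (2 : Cardinal) ^ lam).ord) := by
  obtain ⟨f⟩ : Nonempty (𝒫 Pk κ lam ↪ Iio ((2 : Cardinal) ^ (2 : Cardinal) ^ lam).ord) := by
    rw [← le_def, mk_Iio_ordinal, card_ord]
    exact mk_powerset_Pk_le κ lam
  classical
  refine ⟨fun A => if h : A ∈ 𝒫 Pk κ lam then f ⟨A, h⟩ else 0, fun A hA B hB hAB => ?_,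
    fun A hA => ?_⟩
  · simp only [dif_pos hA, dif_pos hB] at hAB
    exact congrArg Subtype.val (f.injective (Subtype.ext hAB))
  · simp only [dif_pos hA]
    exact (f _).2

lemma exists_realizing_of_tp {κ lam μ : Cardinal.{0}} (hreg : κ.IsRegular) (hsl : κ.IsStrongLimit)
    (hTP : TP κ μ) {code : Set (Set Ordinal.{0}) → Ordinal.{0}} (hcode : InjOn code (𝒫 Pk κ lam)) :
    ∃ e : Set Ordinal, ∀ t ∈ Pk κ μ, ∃ b ∈ Pk κ lam, t ∩ Iio lam.ord ⊆ b ∧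
      ∀ A ∈ 𝒫 Pk κ lam, code A ∈ t → (code A ∈ e ↔ b ∈ A) := by
  set d : Set Ordinal → Set Ordinal :=
    fun a => a ∩ code '' {A ∈ 𝒫 Pk κ lam | a ∩ Iio lam.ord ∈ A}
  obtain ⟨e, -, he⟩ := hTP d (fun a _ => inter_subset_left) (isThin_of_isStrongLimit hreg hsl μ d)
  refine ⟨e, fun t ht => ?_⟩
  obtain ⟨z, hz, htz, hez⟩ := he t ht
  refine ⟨z ∩ Iio lam.ord, ⟨fun α hα => hα.2, (mk_le_mk_of_subset inter_subset_left).trans_lt hz.2⟩,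
    inter_subset_inter_left _ htz, fun A hA hAt => ?_⟩
  calc code A ∈ e ↔ code A ∈ d z ∩ t := by rw [← hez, mem_inter_iff, and_iff_left hAt]
    _ ↔ z ∩ Iio lam.ord ∈ A := by
        simp only [d, mem_inter_iff, htz hAt, hAt, true_and, and_true,
          hcode.mem_image_iff (sep_subset _ _) hA, mem_sep_iff, hA]

theorem exists_kComplete_fine_of_tp {κ lam : Cardinal.{0}} (hreg : κ.IsRegular)
    (hsl : κ.IsStrongLimit) (hTP : TP κ ((2 : Cardinal) ^ (2 : Cardinal) ^ lam)) :
    ∃ U, IsUFOn (Pk κ lam) U ∧ KComplete κ (Pk κ lam) U ∧ Fine κ lam U := by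
  obtain ⟨code, hinj, hmaps⟩ := exists_code_powerset_Pk κ lam
  obtain ⟨e, he⟩ := exists_realizing_of_tp hreg hsl hTP hinj
  set U := {A | A ⊆ Pk κ lam ∧ code A ∈ e}
  have hreal : ∀ s ⊆ 𝒫 Pk κ lam, #s < lift.{1} κ → ∃ b ∈ Pk κ lam, ∀ A ∈ s, A ∈ U ↔ b ∈ A := by
    intro s hs hsκ
    obtain ⟨b, hb, -, hbs⟩ := he (code '' s)
      ⟨by rintro _ ⟨A, hA, rfl⟩; exact hmaps (hs hA), mk_image_le.trans_lt hsκ⟩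
    exact ⟨b, hb, fun A hA => (and_iff_right (hs hA)).trans (hbs A (hs hA) (mem_image_of_mem _ hA))⟩
  obtain ⟨hU, hcomp⟩ :=
    isUFOn_and_kComplete_of_realizable hreg.aleph0_le (fun A hA => hA.1) hreal
  refine ⟨U, hU, hcomp, fun x hx => ?_⟩
  have hA : {a ∈ Pk κ lam | x ∈ a} ∈ 𝒫 Pk κ lam := sep_subset _ _
  have hxμ : x < ((2 : Cardinal) ^ (2 : Cardinal) ^ lam).ord :=
    hx.trans_le (ord_le_ord.2 (le_two_power_two_power lam))
  obtain ⟨b, hb, hxb, hbA⟩ := he {code {a ∈ Pk κ lam | x ∈ a}, x}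
    ⟨by rintro _ (rfl | rfl); exacts [hmaps hA, hxμ],
      (toFinite _).lt_aleph0.trans_le (aleph0_le_lift.2 hreg.aleph0_le)⟩
  exact ⟨hA, (hbA _ hA (mem_insert _ _)).2 ⟨hb, hxb ⟨mem_insert_of_mem _ rfl, hx⟩⟩⟩

theorem stronglyCompact_iff_TP (κ : Cardinal.{0}) (hκ : κ.IsInaccessible) :
    IsStronglyCompact κ ↔ ∀ lam : Cardinal.{0}, κ ≤ lam → TP κ lam := by
  refine ⟨fun h lam hlam => ?_, fun h lam hlam => ?_⟩
  · obtain ⟨U, hU, hcomp, hfine⟩ := h lam hlam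
    exact tp_of_kComplete_fine hU hcomp hfine
  · exact exists_kComplete_fine_of_tp hκ.isRegular hκ.isStrongLimit
      (h _ (hlam.trans (le_two_power_two_power lam)))
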